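/- Let X = [0,1]^d, let X_n = {X_1, …, X_n} be n independent random points each uniformly distributed on [0,1]^d, and let U be a further independent uniform random point on [0,1]^d. Let V_d = π^{d/2}/Γ(d/2 + 1) be the volume of the unit Euclidean ball in ℝ^d, and define F_{n,d}(t) = Pr( n^{1/d} V_d^{1/d} · dist(U, X_n) ≤ t ). Then for every t ≥ 0, F_{n,d}(t) → 1 − exp(−t^d) as n → ∞. -/

import Mathlib

/-!
Given `U = u`, the event `n^{1/d} V_d^{1/d} dist(U, X_n) > t` says that all `n` points miss the
closed ball `B(u, r_n)` with `r_n = t / (n V_d)^{1/d}`, so by Fubini it has probability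
`∫ (1 - P(B(u, r_n)))^n du`. The ball has volume `t^d / n`, so `P(B(u, r_n)) ≤ t^d / n`, with
equality unless `u` lies within `r_n` of the boundary of the cube, a layer of measure
`1 - (1 - 2 r_n)^d → 0`. The integral is therefore squeezed between `(1 - t^d/n)^n` and
`(1 - t^d/n)^n + 1 - (1 - 2 r_n)^d`, both of which tend to `exp(-t^d)`.
-/

open Set MeasureTheory Filter

/-- The unit cube `[0,1]^d` in `ℝ^d`. -/
def unitCube (d : ℕ) : Set (EuclideanSpace ℝ (Fin d)) :=
  {x | ∀ i, x i ∈ Set.Icc (0 : ℝ) 1}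

/-- The uniform distribution on the unit cube `[0,1]^d` (which has Lebesgue volume `1`). -/
noncomputable def unifCube (d : ℕ) : Measure (EuclideanSpace ℝ (Fin d)) :=
  volume.restrict (unitCube d)

/-- Volume `V_d = π^{d/2} / Γ(d/2 + 1)` of the unit Euclidean ball in `ℝ^d`. -/
noncomputable def ballVol (d : ℕ) : ℝ :=
  Real.pi ^ ((d : ℝ) / 2) / Real.Gamma ((d : ℝ) / 2 + 1)

/-- `F_{n,d}(t) = Pr( n^{1/d} V_d^{1/d} · dist(U, X_n) ≤ t )`, where `X_1, …, X_n, U` are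
i.i.d. uniform on `[0,1]^d` (modelled on the canonical product probability space). -/
noncomputable def Fnd (n d : ℕ) (t : ℝ) : ℝ :=
  (((Measure.pi fun _ : Fin n => unifCube d).prod (unifCube d))
    {ω : (Fin n → EuclideanSpace ℝ (Fin d)) × EuclideanSpace ℝ (Fin d) |
      (n : ℝ) ^ ((1 : ℝ) / d) * ballVol d ^ ((1 : ℝ) / d) *
        Metric.infDist ω.2 (Set.range ω.1) ≤ t}).toReal

open Metric ENNReal
open scoped Topology

section NearestNeighbour

variable {α : Type*} [PseudoMetricSpace α] {ι : Type*} [Finite ι] [Nonempty ι]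

lemma infDist_range_le_iff (x : α) (f : ι → α) (r : ℝ) :
    infDist x (range f) ≤ r ↔ ∃ i, dist x (f i) ≤ r := by
  constructor
  · intro h
    obtain ⟨_, ⟨i, rfl⟩, hi⟩ :=
      (finite_range f).isCompact.exists_infDist_eq_dist (range_nonempty f) x
    exact ⟨i, hi ▸ h⟩
  · rintro ⟨i, hi⟩
    exact (infDist_le_dist_of_mem (mem_range_self i)).trans hi

lemma setOf_lt_infDist_range (r : ℝ) :
    {p : (ι → α) × α | r < infDist p.2 (range p.1)} = ⋂ i, {p | r < dist p.2 (p.1 i)} := by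
  ext p
  simp only [mem_ofPred_eq, mem_iInter, ← not_le, infDist_range_le_iff, not_exists]

variable [MeasurableSpace α] [OpensMeasurableSpace α] [SecondCountableTopology α] [Countable ι]

lemma measurableSet_lt_infDist_range (r : ℝ) :
    MeasurableSet {p : (ι → α) × α | r < infDist p.2 (range p.1)} := by
  rw [setOf_lt_infDist_range]
  exact .iInter fun i => measurableSet_lt measurable_const
    (continuous_snd.dist ((continuous_apply i).comp continuous_fst)).measurable

lemma pi_prod_lt_infDist_range {n : ℕ} [NeZero n] (μ : Measure α) [SigmaFinite μ] (r : ℝ) :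
    ((Measure.pi fun _ : Fin n => μ).prod μ) {p | r < infDist p.2 (range p.1)}
      = ∫⁻ u, μ (closedBall u r)ᶜ ^ n ∂μ := by
  rw [Measure.prod_apply_symm (measurableSet_lt_infDist_range r)]
  refine lintegral_congr fun u => ?_
  have hslice : (fun x => (x, u)) ⁻¹' {p : (Fin n → α) × α | r < infDist p.2 (range p.1)}
      = univ.pi fun _ => (closedBall u r)ᶜ := by
    ext x
    simp [setOf_lt_infDist_range, dist_comm]
  rw [hslice, Measure.pi_pi, Finset.prod_const, Finset.card_univ, Fintype.card_fin]

end NearestNeighbour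

section Cube

variable {d : ℕ}

lemma volume_setOf_forall_mem_Icc (d : ℕ) (a b : ℝ) :
    volume {x : EuclideanSpace ℝ (Fin d) | ∀ i, x i ∈ Icc a b} = ENNReal.ofReal (b - a) ^ d := by
  have h : {x : EuclideanSpace ℝ (Fin d) | ∀ i, x i ∈ Icc a b}
      = (MeasurableEquiv.toLp 2 (Fin d → ℝ)).symm ⁻¹' univ.pi fun _ => Icc a b := by
    ext x
    simp only [mem_ofPred_eq, mem_preimage, mem_univ_pi]
    rfl
  rw [h, (EuclideanSpace.volume_preserving_symm_measurableEquiv_toLp (Fin d)).measure_preimage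
      (MeasurableSet.univ_pi fun _ => measurableSet_Icc).nullMeasurableSet, volume_pi_pi]
  simp [Real.volume_Icc]

lemma measurableSet_setOf_forall_mem_Icc (d : ℕ) (a b : ℝ) :
    MeasurableSet {x : EuclideanSpace ℝ (Fin d) | ∀ i, x i ∈ Icc a b} := by
  simp only [ofPred_forall]
  exact .iInter fun i => measurableSet_Icc.preimage (EuclideanSpace.proj i).continuous.measurable

instance (d : ℕ) : IsProbabilityMeasure (unifCube d) :=
  ⟨by rw [unifCube, Measure.restrict_apply_univ, unitCube, volume_setOf_forall_mem_Icc]; simp⟩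

lemma ballVol_pos (d : ℕ) : 0 < ballVol d := by
  unfold ballVol
  have := Real.Gamma_pos_of_pos (by positivity : (0 : ℝ) < d / 2 + 1)
  positivity

lemma volume_closedBall_eq_ballVol (hd : d ≠ 0) (u : EuclideanSpace ℝ (Fin d)) {r : ℝ}
    (hr : 0 ≤ r) : volume (closedBall u r) = ENNReal.ofReal (ballVol d * r ^ d) := by
  have : Nonempty (Fin d) := Fin.pos_iff_nonempty.mp (Nat.pos_of_ne_zero hd)
  have hsqrt : √Real.pi ^ d = Real.pi ^ ((d : ℝ) / 2) := by
    rw [Real.sqrt_eq_rpow, ← Real.rpow_natCast, ← Real.rpow_mul Real.pi_pos.le]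
    ring_nf
  rw [EuclideanSpace.volume_closedBall, Fintype.card_fin, hsqrt, ← ENNReal.ofReal_pow hr,
    ← ENNReal.ofReal_mul (by positivity), ballVol, mul_comm]

lemma unifCube_closedBall_le (hd : d ≠ 0) (u : EuclideanSpace ℝ (Fin d)) {r : ℝ} (hr : 0 ≤ r) :
    unifCube d (closedBall u r) ≤ ENNReal.ofReal (ballVol d * r ^ d) :=
  (Measure.restrict_apply_le _ _).trans (volume_closedBall_eq_ballVol hd u hr).le

lemma closedBall_subset_unitCube {u : EuclideanSpace ℝ (Fin d)} {r : ℝ}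
    (hu : ∀ i, u i ∈ Icc r (1 - r)) : closedBall u r ⊆ unitCube d := by
  intro v hv i
  have hvi := abs_le.mp ((PiLp.dist_apply_le v u i).trans (mem_closedBall.mp hv))
  exact ⟨by linarith [(hu i).1], by linarith [(hu i).2]⟩

lemma unifCube_closedBall_of_forall_mem_Icc (hd : d ≠ 0) {u : EuclideanSpace ℝ (Fin d)} {r : ℝ}
    (hr : 0 ≤ r) (hu : ∀ i, u i ∈ Icc r (1 - r)) :
    unifCube d (closedBall u r) = ENNReal.ofReal (ballVol d * r ^ d) := by
  rw [unifCube, Measure.restrict_apply measurableSet_closedBall,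
    inter_eq_left.mpr (closedBall_subset_unitCube hu), volume_closedBall_eq_ballVol hd u hr]

lemma unifCube_compl_setOf_forall_mem_Icc (d : ℕ) {r : ℝ} (hr : 0 ≤ r) :
    unifCube d {x | ∀ i, x i ∈ Icc r (1 - r)}ᶜ = 1 - ENNReal.ofReal (1 - 2 * r) ^ d := by
  have hmeas := measurableSet_setOf_forall_mem_Icc d r (1 - r)
  have hsub : {x : EuclideanSpace ℝ (Fin d) | ∀ i, x i ∈ Icc r (1 - r)} ⊆ unitCube d :=
    fun x hx i => ⟨hr.trans (hx i).1, (hx i).2.trans (by linarith)⟩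
  rw [prob_compl_eq_one_sub hmeas, unifCube, Measure.restrict_apply hmeas, inter_eq_left.mpr hsub,
    volume_setOf_forall_mem_Icc]
  ring_nf

end Cube

lemma lintegral_le_add_measure_compl {α : Type*} [MeasurableSpace α] {μ : Measure α}
    [IsProbabilityMeasure μ] {f : α → ℝ≥0∞} {s : Set α} (hs : MeasurableSet s) {c : ℝ≥0∞}
    (hfs : ∀ x ∈ s, f x ≤ c) (hf : ∀ x, f x ≤ 1) : ∫⁻ x, f x ∂μ ≤ c + μ sᶜ :=
  calc ∫⁻ x, f x ∂μ = ∫⁻ x in s, f x ∂μ + ∫⁻ x in sᶜ, f x ∂μ := (lintegral_add_compl f hs).symm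
    _ ≤ ∫⁻ _ in s, c ∂μ + ∫⁻ _ in sᶜ, 1 ∂μ :=
      add_le_add (setLIntegral_mono measurable_const hfs)
        (setLIntegral_mono measurable_const fun x _ => hf x)
    _ ≤ c + μ sᶜ := by
      rw [setLIntegral_const, setLIntegral_const, one_mul]
      gcongr
      exact mul_le_of_le_one_right' prob_le_one

lemma tendsto_ofReal_one_sub_div_pow (c : ℝ) :
    Tendsto (fun n : ℕ => ENNReal.ofReal (1 - c / n) ^ n) atTop
      (𝓝 (ENNReal.ofReal (Real.exp (-c)))) := by
  have hlim : Tendsto (fun n : ℕ => (1 - c / n) ^ n) atTop (𝓝 (Real.exp (-c))) := by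
    simpa [sub_eq_add_neg, neg_div] using Real.tendsto_one_add_div_pow_exp (-c)
  refine (ENNReal.tendsto_ofReal hlim).congr' ?_
  filter_upwards [(tendsto_natCast_atTop_atTop (R := ℝ)).eventually_ge_atTop c,
    eventually_gt_atTop 0] with n hcn hn
  have : c / n ≤ 1 := div_le_one_of_le₀ hcn n.cast_nonneg
  rw [ENNReal.ofReal_pow (by linarith)]

lemma tendsto_lintegral_unifCube_compl_closedBall_pow {d : ℕ} (hd : d ≠ 0) {c : ℝ} {r : ℕ → ℝ}
    (hr : ∀ n, 0 ≤ r n) (hr0 : Tendsto r atTop (𝓝 0))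
    (hvol : ∀ n ≠ 0, ballVol d * r n ^ d = c / n) :
    Tendsto (fun n => ∫⁻ u, unifCube d (closedBall u (r n))ᶜ ^ n ∂unifCube d) atTop
      (𝓝 (ENNReal.ofReal (Real.exp (-c)))) := by
  have hcompl : ∀ n u, unifCube d (closedBall u (r n))ᶜ
      = 1 - unifCube d (closedBall u (r n)) := fun n u =>
    prob_compl_eq_one_sub measurableSet_closedBall
  have hvol_nonneg : ∀ n, 0 ≤ ballVol d * r n ^ d := fun n =>
    mul_nonneg (ballVol_pos d).le (pow_nonneg (hr n) d)
  have hball_le : ∀ n : ℕ, n ≠ 0 → ∀ u,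
      ENNReal.ofReal (1 - c / n) ≤ unifCube d (closedBall u (r n))ᶜ := by
    intro n hn u
    rw [hcompl, ← hvol n hn, ENNReal.ofReal_sub _ (hvol_nonneg n), ENNReal.ofReal_one]
    exact tsub_le_tsub_left (unifCube_closedBall_le hd u (hr n)) 1
  have hlower : ∀ᶠ n : ℕ in atTop, ENNReal.ofReal (1 - c / n) ^ n
      ≤ ∫⁻ u, unifCube d (closedBall u (r n))ᶜ ^ n ∂unifCube d := by
    filter_upwards [eventually_ne_atTop 0] with n hn
    calc ENNReal.ofReal (1 - c / n) ^ n = ∫⁻ _, ENNReal.ofReal (1 - c / n) ^ n ∂unifCube d := by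
          simp
      _ ≤ _ := lintegral_mono fun u => pow_le_pow_left' (hball_le n hn u) n
  -- Only balls centred within `r n` of the boundary stick out of the cube.
  have hupper : ∀ᶠ n in atTop, ∫⁻ u, unifCube d (closedBall u (r n))ᶜ ^ n ∂unifCube d
      ≤ ENNReal.ofReal (1 - c / n) ^ n + (1 - ENNReal.ofReal (1 - 2 * r n) ^ d) := by
    filter_upwards [eventually_ne_atTop 0] with n hn
    rw [← unifCube_compl_setOf_forall_mem_Icc d (hr n)]
    refine lintegral_le_add_measure_compl (measurableSet_setOf_forall_mem_Icc d _ _)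
      (fun u hu => ?_) fun u => pow_le_one' prob_le_one n
    rw [hcompl, unifCube_closedBall_of_forall_mem_Icc hd (hr n) hu, ← hvol n hn,
      ENNReal.ofReal_sub _ (hvol_nonneg n), ENNReal.ofReal_one]
  have hlayer : Tendsto (fun n => 1 - ENNReal.ofReal (1 - 2 * r n) ^ d) atTop (𝓝 0) := by
    have h : Tendsto (fun n => ENNReal.ofReal (1 - 2 * r n) ^ d) atTop (𝓝 1) := by
      have h1 : Tendsto (fun n => 1 - 2 * r n) atTop (𝓝 1) := by
        simpa using tendsto_const_nhds.sub (hr0.const_mul 2)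
      simpa using ENNReal.Tendsto.pow (n := d) (ENNReal.tendsto_ofReal h1)
    simpa using ENNReal.Tendsto.sub tendsto_const_nhds h (.inl one_ne_top)
  exact tendsto_of_tendsto_of_tendsto_of_le_of_le' (tendsto_ofReal_one_sub_div_pow c)
    (by simpa using (tendsto_ofReal_one_sub_div_pow c).add hlayer) hlower hupper

section ScaledRadius

variable {n d : ℕ} {t : ℝ}

noncomputable def scaledRadius (n d : ℕ) (t : ℝ) : ℝ :=
  t / ((n : ℝ) ^ ((1 : ℝ) / d) * ballVol d ^ ((1 : ℝ) / d))

lemma scaledRadius_nonneg (n d : ℕ) (ht : 0 ≤ t) : 0 ≤ scaledRadius n d t :=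
  div_nonneg ht (by have := ballVol_pos d; positivity)

lemma tendsto_scaledRadius (hd : d ≠ 0) (t : ℝ) :
    Tendsto (fun n => scaledRadius n d t) atTop (𝓝 0) :=
  tendsto_const_nhds.div_atTop <|
    ((tendsto_rpow_atTop (by positivity)).comp tendsto_natCast_atTop_atTop).atTop_mul_const
      (Real.rpow_pos_of_pos (ballVol_pos d) _)

lemma ballVol_mul_scaledRadius_pow (hd : d ≠ 0) (t : ℝ) :
    ballVol d * scaledRadius n d t ^ d = t ^ d / n := by
  have hroot : ∀ x : ℝ, 0 ≤ x → (x ^ ((1 : ℝ) / d)) ^ d = x := fun x hx => by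
    rw [one_div, Real.rpow_inv_natCast_pow hx hd]
  rw [scaledRadius, div_pow, mul_pow, hroot _ n.cast_nonneg, hroot _ (ballVol_pos d).le]
  field_simp [(ballVol_pos d).ne']

lemma Fnd_eq_toReal_one_sub [NeZero n] (d : ℕ) (t : ℝ) :
    Fnd n d t
      = (1 - ∫⁻ u, unifCube d (closedBall u (scaledRadius n d t))ᶜ ^ n ∂unifCube d).toReal := by
  have hscale : 0 < (n : ℝ) ^ ((1 : ℝ) / d) * ballVol d ^ ((1 : ℝ) / d) := by
    have := ballVol_pos d
    have : (0 : ℝ) < n := by exact_mod_cast Nat.pos_of_neZero n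
    positivity
  have hset : {ω : (Fin n → EuclideanSpace ℝ (Fin d)) × EuclideanSpace ℝ (Fin d) |
      (n : ℝ) ^ ((1 : ℝ) / d) * ballVol d ^ ((1 : ℝ) / d) * infDist ω.2 (range ω.1) ≤ t}
      = {ω | scaledRadius n d t < infDist ω.2 (range ω.1)}ᶜ := by
    ext ω
    simp only [scaledRadius, mem_ofPred_eq, mem_compl_iff, not_lt, le_div_iff₀' hscale]
  rw [Fnd, hset, prob_compl_eq_one_sub (measurableSet_lt_infDist_range _),
    pi_prod_lt_infDist_range]

end ScaledRadius

/-- For `X_1, …, X_n, U` i.i.d. uniform on `[0,1]^d` and every `t ≥ 0`,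
`F_{n,d}(t) = Pr( n^{1/d} V_d^{1/d} dist(U, X_n) ≤ t ) → 1 - exp(-t^d)` as `n → ∞`. -/
theorem Fnd_tendsto (d : ℕ) (hd : 1 ≤ d) (t : ℝ) (ht : 0 ≤ t) :
    Tendsto (fun n : ℕ => Fnd n d t) atTop (nhds (1 - Real.exp (-(t ^ d)))) := by
  have hd₀ : d ≠ 0 := Nat.one_le_iff_ne_zero.mp hd
  have hvoid := tendsto_lintegral_unifCube_compl_closedBall_pow hd₀ (scaledRadius_nonneg · d ht)
    (tendsto_scaledRadius hd₀ t) fun n _ => ballVol_mul_scaledRadius_pow hd₀ t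
  have hexp : Real.exp (-(t ^ d)) ≤ 1 := Real.exp_le_one_iff.mpr (neg_nonpos.mpr (by positivity))
  have hlim := (ENNReal.tendsto_toReal (by simp)).comp
    (ENNReal.Tendsto.sub tendsto_const_nhds hvoid (.inl one_ne_top))
  rw [ENNReal.toReal_sub_of_le (ENNReal.ofReal_le_one.mpr hexp) one_ne_top, ENNReal.toReal_one,
    ENNReal.toReal_ofReal (Real.exp_nonneg _)] at hlim
  refine hlim.congr' ?_
  filter_upwards [eventually_ne_atTop 0] with n hn
  have : NeZero n := ⟨hn⟩
  exact (Fnd_eq_toReal_one_sub d t).symm
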